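/- arXiv:2101.05113 — 4 statements merged into one kernel-verified Lean document; each statement's English description precedes it below -/
import Mathlib

section
/- Fix Z = [X; Y] ∈ ℝ^{(n₁+n₂)×r}. Suppose there exists a matrix P ∈ ℝ^{r×r} with 1/2 ≤ σ_r(P) ≤ σ_1(P) ≤ 3/2 such that max{‖XP − X⋆‖_F, ‖YP⁻ᵀ − Y⋆‖_F} ≤ δ, where δ ≤ σ_r(X⋆)/80. Then the optimal alignment matrix Q between Z and Z⋆ exists (i.e., the infimum of ‖XP' − X⋆‖_F² + ‖Y(P')⁻ᵀ − Y⋆‖_F² over invertible P' ∈ ℝ^{r×r} is attained at some invertible Q), and moreover ‖P − Q‖ ≤ ‖P − Q‖_F ≤ 5δ/σ_r(X⋆). -/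
open Matrix BigOperators

/-- Frobenius norm of a real matrix. -/
noncomputable def frobNorm {m n : ℕ} (A : Matrix (Fin m) (Fin n) ℝ) : ℝ :=
  Real.sqrt (∑ i, ∑ j, (A i j) ^ 2)

/-- Spectral norm (largest singular value) of a real matrix. -/
noncomputable def specNorm {m n : ℕ} (A : Matrix (Fin m) (Fin n) ℝ) : ℝ :=
  ‖LinearMap.toContinuousLinearMap (Matrix.toEuclideanLin A)‖

/-- Smallest singular value of a matrix with `r` columns (the `r`-th largest singular value). -/
noncomputable def sigmaMinCol {m r : ℕ} (A : Matrix (Fin m) (Fin r) ℝ) : ℝ :=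
  sInf { s | ∃ v : EuclideanSpace ℝ (Fin r), ‖v‖ = 1 ∧ s = ‖Matrix.toEuclideanLin A v‖ }

/-- Matrix inner product `⟨A, B⟩ = Tr(Bᵀ A)`. -/
noncomputable def matInner {m n : ℕ} (A B : Matrix (Fin m) (Fin n) ℝ) : ℝ :=
  Matrix.trace (Bᵀ * A)

/-- Euclidean norm on `ℝ^m`. -/
noncomputable def vec2Norm {m : ℕ} (y : Fin m → ℝ) : ℝ :=
  Real.sqrt (∑ i, (y i) ^ 2)

/-- The sensing operator `𝒜(M) = (⟨A_i, M⟩)_{i=1..m}`. -/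
noncomputable def senseOp {n₁ n₂ m : ℕ} (As : Fin m → Matrix (Fin n₁) (Fin n₂) ℝ)
    (M : Matrix (Fin n₁) (Fin n₂) ℝ) : Fin m → ℝ :=
  fun i => matInner (As i) M

/-- The adjoint operator `𝒜*(y) = ∑ i, y i • A i`. -/
noncomputable def senseAdj {n₁ n₂ m : ℕ} (As : Fin m → Matrix (Fin n₁) (Fin n₂) ℝ)
    (y : Fin m → ℝ) : Matrix (Fin n₁) (Fin n₂) ℝ :=
  ∑ i, y i • As i

/-- Rank-`k` restricted isometry property with constant `δ`. -/
def HasRIP {n₁ n₂ m : ℕ} (As : Fin m → Matrix (Fin n₁) (Fin n₂) ℝ) (k : ℕ) (δ : ℝ) : Prop :=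
  0 ≤ δ ∧ δ < 1 ∧
  ∀ M : Matrix (Fin n₁) (Fin n₂) ℝ, M.rank ≤ k →
    (1 - δ) * (frobNorm M) ^ 2 ≤ (vec2Norm (senseOp As M)) ^ 2 ∧
    (vec2Norm (senseOp As M)) ^ 2 ≤ (1 + δ) * (frobNorm M) ^ 2

/-- dist(Z, Z⋆): infimum over invertible `P` of
`sqrt(‖XP − X⋆‖_F² + ‖YP⁻ᵀ − Y⋆‖_F²)`. -/
noncomputable def distZ {n₁ n₂ r : ℕ} (X Xs : Matrix (Fin n₁) (Fin r) ℝ)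
    (Y Ys : Matrix (Fin n₂) (Fin r) ℝ) : ℝ :=
  sInf { v | ∃ P : Matrix (Fin r) (Fin r) ℝ, IsUnit P ∧
    v = Real.sqrt ((frobNorm (X * P - Xs)) ^ 2 + (frobNorm (Y * (P⁻¹)ᵀ - Ys)) ^ 2) }

/-!
The orthonormal factors do not change the smallest singular value, so `σ_r(X⋆) = σ_r(Y⋆) =: σ`.
Weyl's perturbation bound gives `σ_r(XP), σ_r(YP⁻ᵀ) ≥ σ - δ > 0`, hence `X` and `Y` have full
column rank, with `σ_r(X) ≥ (σ - δ) / ‖P‖ ≥ 2(σ - δ)/3`. Full column rank makes the sublevel sets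
of the alignment loss, viewed on pairs `(A, B)` with `AB = 1`, compact, so a minimizer `Q` exists.
Its loss is at most that of `P`, which gives `‖XQ - X⋆‖_F ≤ 2δ`, and then
`σ_r(X) ‖P - Q‖_F ≤ ‖X(P - Q)‖_F ≤ 3δ`.
-/

-- `‖A‖` denotes the Frobenius norm of a matrix `A` throughout.
attribute [local instance] Matrix.frobeniusNormedAddCommGroup Matrix.frobeniusNormedSpace

section SingularValues

variable {m n r : ℕ}

lemma frobNorm_eq_norm (A : Matrix (Fin m) (Fin n) ℝ) : frobNorm A = ‖A‖ := by
  simp [frobNorm, Matrix.frobenius_norm_def, Real.sqrt_eq_rpow]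

lemma norm_sq_eq_sum_col (A : Matrix (Fin m) (Fin n) ℝ) :
    ‖A‖ ^ 2 = ∑ j, ‖WithLp.toLp 2 (Aᵀ j)‖ ^ 2 := by
  simp only [← frobNorm_eq_norm, frobNorm, EuclideanSpace.norm_sq_eq, Real.norm_eq_abs, sq_abs,
    transpose_apply]
  rw [Real.sq_sqrt (by positivity), Finset.sum_comm]

lemma norm_toEuclideanLin_le_specNorm_mul (A : Matrix (Fin m) (Fin n) ℝ)
    (v : EuclideanSpace ℝ (Fin n)) : ‖toEuclideanLin A v‖ ≤ specNorm A * ‖v‖ :=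
  (LinearMap.toContinuousLinearMap (toEuclideanLin A)).le_opNorm v

lemma specNorm_le_norm (A : Matrix (Fin m) (Fin n) ℝ) : specNorm A ≤ ‖A‖ := by
  refine ContinuousLinearMap.opNorm_le_bound _ (norm_nonneg A) fun v => ?_
  rw [LinearMap.coe_toContinuousLinearMap', toLpLin_apply,
    ← frobenius_norm_replicateCol (ι := Unit), replicateCol_mulVec,
    ← frobenius_norm_replicateCol (ι := Unit)]
  exact frobenius_norm_mul _ _

lemma sigmaMinCol_nonneg (A : Matrix (Fin m) (Fin r) ℝ) : 0 ≤ sigmaMinCol A :=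
  Real.sInf_nonneg fun _ ⟨_, _, hs⟩ => hs ▸ norm_nonneg _

lemma sigmaMinCol_mul_norm_le (A : Matrix (Fin m) (Fin r) ℝ) (v : EuclideanSpace ℝ (Fin r)) :
    sigmaMinCol A * ‖v‖ ≤ ‖toEuclideanLin A v‖ := by
  rcases eq_or_ne v 0 with rfl | hv
  · simp
  have hv' : 0 < ‖v‖ := norm_pos_iff.mpr hv
  have hunit : ‖‖v‖⁻¹ • v‖ = 1 := by rw [norm_smul, norm_inv, norm_norm, inv_mul_cancel₀ hv'.ne']
  have hle : sigmaMinCol A ≤ ‖toEuclideanLin A (‖v‖⁻¹ • v)‖ :=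
    csInf_le ⟨0, fun _ ⟨_, _, hs⟩ => hs ▸ norm_nonneg _⟩ ⟨_, hunit, rfl⟩
  rwa [map_smul, norm_smul, norm_inv, norm_norm, inv_mul_eq_div, le_div_iff₀ hv'] at hle

lemma le_sigmaMinCol (hr : 0 < r) {A : Matrix (Fin m) (Fin r) ℝ} {c : ℝ}
    (h : ∀ v, c * ‖v‖ ≤ ‖toEuclideanLin A v‖) : c ≤ sigmaMinCol A := by
  refine le_csInf ?_ ?_
  · exact ⟨_, EuclideanSpace.single ⟨0, hr⟩ 1, by simp, rfl⟩
  · rintro _ ⟨v, hv, rfl⟩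
    simpa [hv] using h v

lemma pos_of_sigmaMinCol_pos {A : Matrix (Fin m) (Fin r) ℝ} (h : 0 < sigmaMinCol A) : 0 < r := by
  refine Nat.pos_of_ne_zero fun hr => h.ne' ?_
  subst hr
  have hempty : { s | ∃ v : EuclideanSpace ℝ (Fin 0), ‖v‖ = 1 ∧
      s = ‖toEuclideanLin A v‖ } = ∅ :=
    Set.eq_empty_of_forall_notMem fun _ ⟨v, hv, _⟩ => by simp [Subsingleton.elim v 0] at hv
  rw [sigmaMinCol, hempty, Real.sInf_empty]

lemma sigmaMinCol_sub_specNorm_le (hr : 0 < r) (A B : Matrix (Fin m) (Fin r) ℝ) :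
    sigmaMinCol A - specNorm (B - A) ≤ sigmaMinCol B := by
  refine le_sigmaMinCol hr fun v => ?_
  have hBA := norm_toEuclideanLin_le_specNorm_mul (B - A) v
  have hA := sigmaMinCol_mul_norm_le A v
  rw [map_sub, LinearMap.sub_apply] at hBA
  linarith [norm_sub_norm_le (toEuclideanLin A v) (toEuclideanLin B v),
    norm_sub_rev (toEuclideanLin B v) (toEuclideanLin A v)]

lemma sigmaMinCol_mul_le (hr : 0 < r) (A : Matrix (Fin m) (Fin r) ℝ) {B : Matrix (Fin r) (Fin r) ℝ}
    (hB : IsUnit B) : sigmaMinCol (A * B) ≤ specNorm B * sigmaMinCol A := by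
  have hBB : B * B⁻¹ = 1 := mul_nonsing_inv B ((isUnit_iff_isUnit_det B).mp hB)
  have key : ∀ v, sigmaMinCol (A * B) * ‖v‖ ≤ specNorm B * ‖toEuclideanLin A v‖ := by
    intro v
    set w := toEuclideanLin B⁻¹ v
    have hBw : toEuclideanLin B w = v := by
      rw [← LinearMap.comp_apply, ← toLpLin_mul_same, hBB, toLpLin_one, LinearMap.id_apply]
    have hABw : toEuclideanLin (A * B) w = toEuclideanLin A v := by
      rw [toLpLin_mul_same, LinearMap.comp_apply, hBw]
    calc sigmaMinCol (A * B) * ‖v‖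
        ≤ sigmaMinCol (A * B) * (specNorm B * ‖w‖) := by
          rw [← hBw]
          exact mul_le_mul_of_nonneg_left (norm_toEuclideanLin_le_specNorm_mul B w)
            (sigmaMinCol_nonneg _)
      _ = specNorm B * (sigmaMinCol (A * B) * ‖w‖) := by ring
      _ ≤ specNorm B * ‖toEuclideanLin A v‖ := by
          rw [← hABw]
          exact mul_le_mul_of_nonneg_left (sigmaMinCol_mul_norm_le _ w) (norm_nonneg _)
  conv_rhs => rw [sigmaMinCol, ← smul_eq_mul]
  rw [← Real.sInf_smul_of_nonneg (a := specNorm B) (norm_nonneg _)]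
  refine le_csInf ⟨_, _, ⟨EuclideanSpace.single ⟨0, hr⟩ 1, by simp, rfl⟩, rfl⟩ ?_
  rintro _ ⟨_, ⟨v, hv, rfl⟩, rfl⟩
  simpa [hv] using key v

lemma sigmaMinCol_one (hr : 0 < r) : sigmaMinCol (1 : Matrix (Fin r) (Fin r) ℝ) = 1 := by
  have hset : { s | ∃ v : EuclideanSpace ℝ (Fin r), ‖v‖ = 1 ∧
      s = ‖toEuclideanLin (1 : Matrix (Fin r) (Fin r) ℝ) v‖ } = {1} := by
    ext s
    simp only [toLpLin_one, LinearMap.id_apply, Set.mem_ofPred_eq, Set.mem_singleton_iff]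
    exact ⟨fun ⟨v, hv, hs⟩ => hs.trans hv,
      fun hs => ⟨EuclideanSpace.single ⟨0, hr⟩ 1, by simp, by simp [hs]⟩⟩
  rw [sigmaMinCol, hset, csInf_singleton]

lemma sigmaMinCol_pos_of_isUnit (hr : 0 < r) {A : Matrix (Fin r) (Fin r) ℝ} (hA : IsUnit A) :
    0 < sigmaMinCol A := by
  have h := sigmaMinCol_mul_le hr A (isUnit_nonsing_inv_iff.mpr hA)
  rw [mul_nonsing_inv A ((isUnit_iff_isUnit_det A).mp hA), sigmaMinCol_one hr] at h
  exact (sigmaMinCol_nonneg A).lt_of_ne fun h0 => by simp [← h0] at h; linarith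

lemma isUnit_of_sigmaMinCol_pos {A : Matrix (Fin r) (Fin r) ℝ} (h : 0 < sigmaMinCol A) :
    IsUnit A := by
  rw [isUnit_iff_isUnit_det, isUnit_iff_ne_zero]
  intro hdet
  obtain ⟨v, hv, hAv⟩ := exists_mulVec_eq_zero_iff.mpr hdet
  have hle := sigmaMinCol_mul_norm_le A (WithLp.toLp 2 v)
  rw [toLpLin_toLp, toLin'_apply, hAv, WithLp.toLp_zero, norm_zero] at hle
  have hpos : 0 < ‖WithLp.toLp 2 v‖ := norm_pos_iff.mpr (by simpa using hv)
  nlinarith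

lemma sigmaMinCol_sub_norm_le_specNorm_mul (hr : 0 < r) (A' A : Matrix (Fin m) (Fin r) ℝ)
    {B : Matrix (Fin r) (Fin r) ℝ} (hB : IsUnit B) :
    sigmaMinCol A' - ‖A * B - A'‖ ≤ specNorm B * sigmaMinCol A :=
  calc sigmaMinCol A' - ‖A * B - A'‖ ≤ sigmaMinCol A' - specNorm (A * B - A') := by
        linarith [specNorm_le_norm (A * B - A')]
    _ ≤ sigmaMinCol (A * B) := sigmaMinCol_sub_specNorm_le hr _ _
    _ ≤ specNorm B * sigmaMinCol A := sigmaMinCol_mul_le hr A hB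

lemma norm_toEuclideanLin_of_transpose_mul_self {U : Matrix (Fin m) (Fin r) ℝ} (hU : Uᵀ * U = 1)
    (v : EuclideanSpace ℝ (Fin r)) : ‖toEuclideanLin U v‖ = ‖v‖ := by
  have h : ‖toEuclideanLin U v‖ ^ 2 = ‖v‖ ^ 2 := by
    rw [← real_inner_self_eq_norm_sq, ← real_inner_self_eq_norm_sq,
      ← LinearMap.adjoint_inner_left, ← toEuclideanLin_conjTranspose_eq_adjoint,
      conjTranspose_eq_transpose_of_trivial, ← LinearMap.comp_apply, ← toLpLin_mul_same, hU,
      toLpLin_one, LinearMap.id_apply]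
  exact (sq_eq_sq₀ (norm_nonneg _) (norm_nonneg _)).mp h

lemma sigmaMinCol_mul_of_transpose_mul_self {U : Matrix (Fin m) (Fin n) ℝ} (hU : Uᵀ * U = 1)
    (A : Matrix (Fin n) (Fin r) ℝ) : sigmaMinCol (U * A) = sigmaMinCol A := by
  simp only [sigmaMinCol, toLpLin_mul_same, LinearMap.comp_apply,
    norm_toEuclideanLin_of_transpose_mul_self hU]

lemma sigmaMinCol_mul_norm_le_norm_mul (X : Matrix (Fin m) (Fin r) ℝ)
    (M : Matrix (Fin r) (Fin n) ℝ) : sigmaMinCol X * ‖M‖ ≤ ‖X * M‖ := by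
  refine (pow_le_pow_iff_left₀ (mul_nonneg (sigmaMinCol_nonneg X) (norm_nonneg M))
    (norm_nonneg _) two_ne_zero).mp ?_
  rw [mul_pow, norm_sq_eq_sum_col, norm_sq_eq_sum_col, Finset.mul_sum]
  gcongr with j
  rw [← mul_pow]
  exact pow_le_pow_left₀ (mul_nonneg (sigmaMinCol_nonneg X) (norm_nonneg _))
    (sigmaMinCol_mul_norm_le X (WithLp.toLp 2 (Mᵀ j))) 2

lemma norm_le_of_norm_mul_sub_le {X : Matrix (Fin m) (Fin r) ℝ} {Xs : Matrix (Fin m) (Fin n) ℝ}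
    (hX : 0 < sigmaMinCol X) {A : Matrix (Fin r) (Fin n) ℝ} {ε : ℝ} (h : ‖X * A - Xs‖ ≤ ε) :
    ‖A‖ ≤ (‖Xs‖ + ε) / sigmaMinCol X := by
  rw [le_div_iff₀ hX, mul_comm]
  linarith [sigmaMinCol_mul_norm_le_norm_mul X A, norm_le_insert' (X * A) Xs]

end SingularValues

section Alignment

variable {n₁ n₂ r : ℕ}

noncomputable def alignLoss (X Xs : Matrix (Fin n₁) (Fin r) ℝ) (Y Ys : Matrix (Fin n₂) (Fin r) ℝ)
    (P : Matrix (Fin r) (Fin r) ℝ) : ℝ :=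
  ‖X * P - Xs‖ ^ 2 + ‖Y * (P⁻¹)ᵀ - Ys‖ ^ 2

lemma exists_isMinOn_alignLoss {X Xs : Matrix (Fin n₁) (Fin r) ℝ}
    {Y Ys : Matrix (Fin n₂) (Fin r) ℝ} (hX : 0 < sigmaMinCol X) (hY : 0 < sigmaMinCol Y) :
    ∃ Q, IsUnit Q ∧ IsMinOn (alignLoss X Xs Y Ys) {P | IsUnit P} Q := by
  -- Inversion is not continuous on all matrices, so minimize over pairs `(A, B)` with `A * B = 1`.
  set g : Matrix (Fin r) (Fin r) ℝ × Matrix (Fin r) (Fin r) ℝ → ℝ :=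
    fun p => ‖X * p.1 - Xs‖ ^ 2 + ‖Y * p.2ᵀ - Ys‖ ^ 2
  have hg : Continuous g := by fun_prop
  set K := {p | p.1 * p.2 = 1 ∧ g p ≤ g (1, 1)}
  have hK : IsCompact K := by
    set ε := √(g (1, 1))
    refine Metric.isCompact_of_isClosed_isBounded
      ((isClosed_eq (by fun_prop) continuous_const).inter (isClosed_le hg continuous_const))
      ((Metric.isBounded_closedBall (x := 0) (r := (‖Xs‖ + ε) / sigmaMinCol X)).prod
        (Metric.isBounded_closedBall (x := 0) (r := (‖Ys‖ + ε) / sigmaMinCol Y)) |>.subset ?_)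
    rintro p ⟨-, hp⟩
    have hp₁ : ‖X * p.1 - Xs‖ ≤ ε :=
      Real.le_sqrt_of_sq_le (by simp only [g] at hp ⊢; nlinarith)
    have hp₂ : ‖Y * p.2ᵀ - Ys‖ ≤ ε :=
      Real.le_sqrt_of_sq_le (by simp only [g] at hp ⊢; nlinarith)
    refine ⟨mem_closedBall_zero_iff.mpr (norm_le_of_norm_mul_sub_le hX hp₁),
      mem_closedBall_zero_iff.mpr ?_⟩
    rw [← frobenius_norm_transpose]
    exact norm_le_of_norm_mul_sub_le hY hp₂
  obtain ⟨q, ⟨hq, -⟩, hqmin⟩ :=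
    hK.exists_isMinOn ⟨(1, 1), by simp [K]⟩ hg.continuousOn
  refine ⟨q.1, (isUnit_iff_isUnit_det _).mpr (isUnit_det_of_right_inverse hq), fun P hP => ?_⟩
  have hPP : P * P⁻¹ = 1 := mul_nonsing_inv P ((isUnit_iff_isUnit_det P).mp hP)
  have hq' : alignLoss X Xs Y Ys q.1 = g q := by simp [alignLoss, g, inv_eq_right_inv hq]
  change alignLoss X Xs Y Ys q.1 ≤ g (P, P⁻¹)
  rw [hq']
  by_cases hPK : (P, P⁻¹) ∈ K
  · exact hqmin hPK
  · have hlt : g (1, 1) < g (P, P⁻¹) := lt_of_not_ge fun h => hPK ⟨hPP, h⟩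
    exact (hqmin (show ((1 : Matrix (Fin r) (Fin r) ℝ), 1) ∈ K by simp [K])).trans hlt.le

lemma sigmaMinCol_mul_norm_sub_le_of_isMinOn {X Xs : Matrix (Fin n₁) (Fin r) ℝ}
    {Y Ys : Matrix (Fin n₂) (Fin r) ℝ} {P Q : Matrix (Fin r) (Fin r) ℝ} {δ : ℝ}
    (hQ : IsMinOn (alignLoss X Xs Y Ys) {P | IsUnit P} Q) (hP : IsUnit P)
    (hX : ‖X * P - Xs‖ ≤ δ) (hY : ‖Y * (P⁻¹)ᵀ - Ys‖ ≤ δ) :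
    sigmaMinCol X * ‖P - Q‖ ≤ 3 * δ := by
  have hQX : ‖X * Q - Xs‖ ≤ 2 * δ := by
    have h : alignLoss X Xs Y Ys Q ≤ alignLoss X Xs Y Ys P := hQ hP
    simp only [alignLoss] at h
    nlinarith [norm_nonneg (X * Q - Xs), norm_nonneg (Y * (Q⁻¹)ᵀ - Ys),
      norm_nonneg (X * P - Xs), norm_nonneg (Y * (P⁻¹)ᵀ - Ys)]
  calc sigmaMinCol X * ‖P - Q‖ ≤ ‖X * (P - Q)‖ := sigmaMinCol_mul_norm_le_norm_mul X _
    _ = ‖(X * P - Xs) - (X * Q - Xs)‖ := by rw [Matrix.mul_sub, sub_sub_sub_cancel_right]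
    _ ≤ 3 * δ := by linarith [norm_sub_le (X * P - Xs) (X * Q - Xs)]

end Alignment

/-- Lemma 1: if some nearly-orthonormal `P`
(`1/2 ≤ σ_r(P) ≤ σ_1(P) ≤ 3/2`) aligns `Z` with `Z⋆` up to error
`δ ≤ σ_r(X⋆)/80`, then the optimal alignment matrix `Q` between `Z` and `Z⋆`
exists, and `‖P − Q‖ ≤ ‖P − Q‖_F ≤ 5δ/σ_r(X⋆)`. -/
theorem alignment_near_rotation
    {n₁ n₂ r : ℕ}
    (Ustar : Matrix (Fin n₁) (Fin r) ℝ) (Vstar : Matrix (Fin n₂) (Fin r) ℝ)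
    (d : Fin r → ℝ) (hd : ∀ i, 0 < d i)
    (hU : Ustarᵀ * Ustar = 1) (hV : Vstarᵀ * Vstar = 1)
    (Xstar : Matrix (Fin n₁) (Fin r) ℝ) (Ystar : Matrix (Fin n₂) (Fin r) ℝ)
    (hXs : Xstar = Ustar * Matrix.diagonal (fun i => Real.sqrt (d i)))
    (hYs : Ystar = Vstar * Matrix.diagonal (fun i => Real.sqrt (d i)))
    (X : Matrix (Fin n₁) (Fin r) ℝ) (Y : Matrix (Fin n₂) (Fin r) ℝ)
    (P : Matrix (Fin r) (Fin r) ℝ) (δ : ℝ)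
    (hP₁ : 1 / 2 ≤ sigmaMinCol P) (hP₂ : specNorm P ≤ 3 / 2)
    (hX : frobNorm (X * P - Xstar) ≤ δ)
    (hY : frobNorm (Y * (P⁻¹)ᵀ - Ystar) ≤ δ)
    (hδ : δ ≤ sigmaMinCol Xstar / 80) :
    ∃ Q : Matrix (Fin r) (Fin r) ℝ, IsUnit Q ∧
      (∀ P' : Matrix (Fin r) (Fin r) ℝ, IsUnit P' →
        (frobNorm (X * Q - Xstar)) ^ 2 + (frobNorm (Y * (Q⁻¹)ᵀ - Ystar)) ^ 2 ≤
          (frobNorm (X * P' - Xstar)) ^ 2 + (frobNorm (Y * (P'⁻¹)ᵀ - Ystar)) ^ 2) ∧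
      specNorm (P - Q) ≤ frobNorm (P - Q) ∧
      frobNorm (P - Q) ≤ 5 * δ / sigmaMinCol Xstar := by
  simp only [frobNorm_eq_norm] at hX hY ⊢
  have hr : 0 < r := pos_of_sigmaMinCol_pos (lt_of_lt_of_le (by norm_num) hP₁)
  have hPunit : IsUnit P := isUnit_of_sigmaMinCol_pos (lt_of_lt_of_le (by norm_num) hP₁)
  have hσ : 0 < sigmaMinCol Xstar := by
    rw [hXs, sigmaMinCol_mul_of_transpose_mul_self hU]
    exact sigmaMinCol_pos_of_isUnit hr (isUnit_diagonal.mpr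
      (Pi.isUnit_iff.mpr fun i => (Real.sqrt_pos.mpr (hd i)).ne'.isUnit))
  have hσY : sigmaMinCol Ystar = sigmaMinCol Xstar := by
    rw [hXs, hYs, sigmaMinCol_mul_of_transpose_mul_self hU,
      sigmaMinCol_mul_of_transpose_mul_self hV]
  have hXσ : sigmaMinCol Xstar - δ ≤ 3 / 2 * sigmaMinCol X := by
    have hweyl := sigmaMinCol_sub_norm_le_specNorm_mul hr Xstar X hPunit
    nlinarith [sigmaMinCol_nonneg X]
  have hYσ : sigmaMinCol Xstar - δ ≤ specNorm (P⁻¹)ᵀ * sigmaMinCol Y := by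
    have hweyl := sigmaMinCol_sub_norm_le_specNorm_mul hr Ystar Y
      ((isUnit_transpose _).mpr (isUnit_nonsing_inv_iff.mpr hPunit))
    linarith
  have hYpos : 0 < sigmaMinCol Y :=
    (sigmaMinCol_nonneg Y).lt_of_ne fun h => by rw [← h, mul_zero] at hYσ; linarith
  obtain ⟨Q, hQ, hQmin⟩ :=
    exists_isMinOn_alignLoss (Xs := Xstar) (Ys := Ystar) (by linarith) hYpos
  refine ⟨Q, hQ, fun P' hP' => hQmin hP', specNorm_le_norm _, ?_⟩
  have hPQ := sigmaMinCol_mul_norm_sub_le_of_isMinOn hQmin hPunit hX hY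
  rw [le_div_iff₀ hσ]
  nlinarith [norm_nonneg (P - Q)]
end

section
/- Let Z = [X; Y] ∈ ℝ^{(n₁+n₂)×r} and suppose the optimal alignment matrix Q between Z and Z⋆ exists. Then, setting X̃ = XQ and Ỹ = YQ⁻ᵀ, one has X̃ᵀ(X̃ − X⋆) = (Ỹ − Y⋆)ᵀỸ. -/
open Matrix BigOperators

/-! Perturb the optimal `Q` along `t ↦ Q (1 + φ t • E)` with `E = single i j 1`, choosing `φ` so
that the inverse is `(1 + ψ t • E) Q⁻¹`: `φ t = t`, `ψ t = -t` when `i ≠ j` (as `E * E = 0`), and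
`φ t = exp t - 1`, `ψ t = exp (-t) - 1` when `i = j` (as `E * E = E`). Along this curve the alignment
objective exceeds its value at `Q` by
`2 φ ⟨X̃ᵀ(X̃ - X⋆), E⟩ + 2 ψ ⟨(Ỹ - Y⋆)ᵀỸ, E⟩ + O(φ² + ψ²)`, which has a minimum at `t = 0`;
since `φ' 0 = 1` and `ψ' 0 = -1`, the two `(i, j)` entries agree. -/

lemma eq_of_forall_quadratic_perturbation_nonneg {φ ψ : ℝ → ℝ} {a b c d : ℝ}
    (hφ₀ : φ 0 = 0) (hψ₀ : ψ 0 = 0) (hφ : HasDerivAt φ 1 0) (hψ : HasDerivAt ψ (-1) 0)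
    (h : ∀ t, 0 ≤ 2 * φ t * a + φ t ^ 2 * c + 2 * ψ t * b + ψ t ^ 2 * d) : a = b := by
  have hmin : IsLocalMin (fun t => 2 * φ t * a + φ t ^ 2 * c + 2 * ψ t * b + ψ t ^ 2 * d) 0 :=
    Filter.Eventually.of_forall fun t => by simpa [hφ₀, hψ₀] using h t
  have hderiv := ((((hφ.const_mul 2).mul_const a).add ((hφ.pow 2).mul_const c)).add
    ((hψ.const_mul 2).mul_const b)).add ((hψ.pow 2).mul_const d)
  have := hmin.hasDerivAt_eq_zero hderiv
  norm_num [hφ₀, hψ₀] at this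
  linarith

section FrobeniusInner

variable {m n k : ℕ}

lemma frobNorm_sq (A : Matrix (Fin m) (Fin n) ℝ) : frobNorm A ^ 2 = matInner A A := by
  rw [frobNorm, Real.sq_sqrt (by positivity), matInner, trace, Finset.sum_comm]
  simp only [diag_apply, mul_apply, transpose_apply, sq]

lemma frobNorm_add_smul_sq (A B : Matrix (Fin m) (Fin n) ℝ) (t : ℝ) :
    frobNorm (A + t • B) ^ 2 = frobNorm A ^ 2 + 2 * t * matInner A B + t ^ 2 * frobNorm B ^ 2 := by
  simp only [frobNorm_sq, matInner, transpose_add, transpose_smul, Matrix.add_mul, Matrix.mul_add,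
    Matrix.smul_mul, Matrix.mul_smul, trace_add, trace_smul, smul_eq_mul]
  rw [← trace_transpose (Aᵀ * B), transpose_mul, transpose_transpose]
  ring

lemma matInner_mul_right (A : Matrix (Fin m) (Fin n) ℝ) (B : Matrix (Fin m) (Fin k) ℝ)
    (E : Matrix (Fin k) (Fin n) ℝ) : matInner A (B * E) = matInner (Bᵀ * A) E := by
  rw [matInner, matInner, transpose_mul, Matrix.mul_assoc]

lemma matInner_mul_transpose_right (A : Matrix (Fin m) (Fin k) ℝ) (B : Matrix (Fin m) (Fin n) ℝ)
    (E : Matrix (Fin k) (Fin n) ℝ) : matInner A (B * Eᵀ) = matInner (Aᵀ * B) E := by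
  rw [matInner, matInner, ← trace_transpose (Eᵀ * (Aᵀ * B))]
  simp only [transpose_mul, transpose_transpose, Matrix.mul_assoc]
  rw [trace_mul_comm, Matrix.mul_assoc]

lemma matInner_single_one (M : Matrix (Fin m) (Fin n) ℝ) (i : Fin m) (j : Fin n) :
    matInner M (single i j 1) = M i j := by
  rw [matInner, transpose_single, trace_single_mul, one_smul]

end FrobeniusInner

lemma one_add_smul_mul_one_add_smul {R A : Type*} [CommRing R] [Ring A] [Algebra R A]
    (E : A) (a b : R) : (1 + a • E) * (1 + b • E) = 1 + (a + b) • E + (a * b) • (E * E) := by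
  simp only [add_mul, mul_add, one_mul, mul_one, smul_mul_assoc, mul_smul_comm, smul_add,
    smul_smul, add_smul, mul_comm b a]
  abel

lemma exists_inverse_pair_one_add_smul_single {r : ℕ} (i j : Fin r) :
    ∃ φ ψ : ℝ → ℝ, φ 0 = 0 ∧ ψ 0 = 0 ∧ HasDerivAt φ 1 0 ∧ HasDerivAt ψ (-1) 0 ∧
      ∀ t, (1 + φ t • single i j (1 : ℝ)) * (1 + ψ t • single i j 1) = 1 := by
  rcases eq_or_ne i j with rfl | hij
  · refine ⟨fun t => Real.exp t - 1, fun t => Real.exp (-t) - 1, by simp, by simp, ?_, ?_,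
      fun t => ?_⟩
    · simpa using (Real.hasDerivAt_exp 0).sub_const 1
    · simpa using ((hasDerivAt_neg 0).exp).sub_const 1
    · have hexp : Real.exp t * Real.exp (-t) = 1 := by
        rw [← Real.exp_add, add_neg_cancel, Real.exp_zero]
      have hcoeff :
          Real.exp t - 1 + (Real.exp (-t) - 1) + (Real.exp t - 1) * (Real.exp (-t) - 1) = 0 := by
        linear_combination hexp
      beta_reduce
      rw [one_add_smul_mul_one_add_smul, single_mul_single_same, one_mul, add_assoc, ← add_smul,
        hcoeff, zero_smul, add_zero]
  · refine ⟨fun t => t, fun t => -t, rfl, neg_zero, hasDerivAt_id 0, hasDerivAt_neg 0, fun t => ?_⟩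
    rw [one_add_smul_mul_one_add_smul, single_mul_single_of_ne (c := (1 : ℝ)) i j i hij.symm,
      smul_zero, add_neg_cancel, zero_smul, add_zero, add_zero]

lemma alignment_perturbation_nonneg {n₁ n₂ r : ℕ} (Xstar X : Matrix (Fin n₁) (Fin r) ℝ)
    (Ystar Y : Matrix (Fin n₂) (Fin r) ℝ) (Q : Matrix (Fin r) (Fin r) ℝ) (hQ : IsUnit Q)
    (hQopt : ∀ P : Matrix (Fin r) (Fin r) ℝ, IsUnit P →
      (frobNorm (X * Q - Xstar)) ^ 2 + (frobNorm (Y * (Q⁻¹)ᵀ - Ystar)) ^ 2 ≤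
        (frobNorm (X * P - Xstar)) ^ 2 + (frobNorm (Y * (P⁻¹)ᵀ - Ystar)) ^ 2)
    (E : Matrix (Fin r) (Fin r) ℝ) {a b : ℝ} (hab : (1 + a • E) * (1 + b • E) = 1) :
    0 ≤ 2 * a * matInner ((X * Q)ᵀ * (X * Q - Xstar)) E + a ^ 2 * frobNorm (X * Q * E) ^ 2
      + 2 * b * matInner ((Y * (Q⁻¹)ᵀ - Ystar)ᵀ * (Y * (Q⁻¹)ᵀ)) E
      + b ^ 2 * frobNorm (Y * (Q⁻¹)ᵀ * Eᵀ) ^ 2 := by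
  have hinv : (Q * (1 + a • E))⁻¹ = (1 + b • E) * Q⁻¹ := by
    rw [Matrix.mul_inv_rev, inv_eq_right_inv hab]
  have hX : X * (Q * (1 + a • E)) - Xstar = (X * Q - Xstar) + a • (X * Q * E) := by
    rw [← Matrix.mul_assoc, Matrix.mul_add, Matrix.mul_one, Matrix.mul_smul]
    abel
  have hY :
      Y * ((Q * (1 + a • E))⁻¹)ᵀ - Ystar = (Y * (Q⁻¹)ᵀ - Ystar) + b • (Y * (Q⁻¹)ᵀ * Eᵀ) := by
    rw [hinv, transpose_mul, ← Matrix.mul_assoc, transpose_add, transpose_one, transpose_smul,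
      Matrix.mul_add, Matrix.mul_one, Matrix.mul_smul]
    abel
  have hmin := hQopt _ (hQ.mul (IsUnit.of_mul_eq_one _ hab))
  rw [hX, hY, frobNorm_add_smul_sq, frobNorm_add_smul_sq, matInner_mul_right,
    matInner_mul_transpose_right] at hmin
  linarith

theorem alignment_first_order_condition_general
    {n₁ n₂ r : ℕ}
    (Xstar : Matrix (Fin n₁) (Fin r) ℝ) (Ystar : Matrix (Fin n₂) (Fin r) ℝ)
    (X : Matrix (Fin n₁) (Fin r) ℝ) (Y : Matrix (Fin n₂) (Fin r) ℝ)
    (Q : Matrix (Fin r) (Fin r) ℝ) (hQ : IsUnit Q)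
    (hQopt : ∀ P : Matrix (Fin r) (Fin r) ℝ, IsUnit P →
      (frobNorm (X * Q - Xstar)) ^ 2 + (frobNorm (Y * (Q⁻¹)ᵀ - Ystar)) ^ 2 ≤
        (frobNorm (X * P - Xstar)) ^ 2 + (frobNorm (Y * (P⁻¹)ᵀ - Ystar)) ^ 2) :
    (X * Q)ᵀ * (X * Q - Xstar) = (Y * (Q⁻¹)ᵀ - Ystar)ᵀ * (Y * (Q⁻¹)ᵀ) := by
  ext i j
  obtain ⟨φ, ψ, hφ₀, hψ₀, hφ, hψ, hinv⟩ := exists_inverse_pair_one_add_smul_single i j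
  have hpert := fun t => alignment_perturbation_nonneg Xstar X Ystar Y Q hQ hQopt _ (hinv t)
  simp only [matInner_single_one] at hpert
  exact eq_of_forall_quadratic_perturbation_nonneg hφ₀ hψ₀ hφ hψ hpert

/-- Lemma 2, first-order optimality of the optimal alignment:
if the optimal alignment matrix `Q` between `Z = [X; Y]` and `Z⋆` exists, then
with `X̃ = XQ` and `Ỹ = YQ⁻ᵀ` one has `X̃ᵀ(X̃ − X⋆) = (Ỹ − Y⋆)ᵀỸ`. -/
theorem alignment_first_order_condition
    {n₁ n₂ r : ℕ}
    (Ustar : Matrix (Fin n₁) (Fin r) ℝ) (Vstar : Matrix (Fin n₂) (Fin r) ℝ)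
    (d : Fin r → ℝ) (hd : ∀ i, 0 < d i)
    (hU : Ustarᵀ * Ustar = 1) (hV : Vstarᵀ * Vstar = 1)
    (Xstar : Matrix (Fin n₁) (Fin r) ℝ) (Ystar : Matrix (Fin n₂) (Fin r) ℝ)
    (hXs : Xstar = Ustar * Matrix.diagonal (fun i => Real.sqrt (d i)))
    (hYs : Ystar = Vstar * Matrix.diagonal (fun i => Real.sqrt (d i)))
    (X : Matrix (Fin n₁) (Fin r) ℝ) (Y : Matrix (Fin n₂) (Fin r) ℝ)
    (Q : Matrix (Fin r) (Fin r) ℝ) (hQ : IsUnit Q)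
    (hQopt : ∀ P : Matrix (Fin r) (Fin r) ℝ, IsUnit P →
      (frobNorm (X * Q - Xstar)) ^ 2 + (frobNorm (Y * (Q⁻¹)ᵀ - Ystar)) ^ 2 ≤
        (frobNorm (X * P - Xstar)) ^ 2 + (frobNorm (Y * (P⁻¹)ᵀ - Ystar)) ^ 2) :
    (X * Q)ᵀ * (X * Q - Xstar) = (Y * (Q⁻¹)ᵀ - Ystar)ᵀ * (Y * (Q⁻¹)ᵀ) :=
  alignment_first_order_condition_general Xstar Ystar X Y Q hQ hQopt
end

section
/- Suppose the linear map 𝒜 satisfies the rank-2r RIP with constant δ_{2r}. Then for all matrices M₁, M₂ ∈ ℝ^{n₁×n₂} of rank at most r, |⟨𝒜(M₁), 𝒜(M₂)⟩ − ⟨M₁, M₂⟩| ≤ δ_{2r}‖M₁‖_F‖M₂‖_F; equivalently, |Tr([(𝒜*𝒜 − ℐ)(M₁)]·M₂ᵀ)| ≤ δ_{2r}‖M₁‖_F‖M₂‖_F, where ℐ is the identity map. -/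
open Matrix BigOperators

/-! Polarization: for `a = ‖M₁‖_F`, `b = ‖M₂‖_F` and `U± = b • M₁ ± a • M₂` (of rank `≤ 2r`), the
defects `‖𝒜 U±‖² − ‖U±‖²` differ by `4ab (⟨𝒜 M₁, 𝒜 M₂⟩ − ⟨M₁, M₂⟩)`, while RIP bounds their sum of
absolute values by `δ (‖U₊‖² + ‖U₋‖²) = 4 δ a² b²`. Through `Matrix.vec` this is a statement
about two pairs of vectors in real inner product spaces. -/

open scoped RealInnerProductSpace

section Polarization

variable {E F : Type*} [NormedAddCommGroup E] [InnerProductSpace ℝ E]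
  [NormedAddCommGroup F] [InnerProductSpace ℝ F]

lemma norm_smul_add_smul_sq (x y : E) (s t : ℝ) :
    ‖s • x + t • y‖ ^ 2 = s ^ 2 * ‖x‖ ^ 2 + 2 * s * t * ⟪x, y⟫ + t ^ 2 * ‖y‖ ^ 2 := by
  rw [norm_add_sq_real, norm_smul, norm_smul, real_inner_smul_left, real_inner_smul_right,
    mul_pow, mul_pow, Real.norm_eq_abs, Real.norm_eq_abs, sq_abs, sq_abs]
  ring

theorem abs_inner_sub_inner_le_of_abs_norm_sq_sub_le {δ : ℝ} {x y : E} {x' y' : F}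
    (h : ∀ s t : ℝ, |‖s • x' + t • y'‖ ^ 2 - ‖s • x + t • y‖ ^ 2| ≤ δ * ‖s • x + t • y‖ ^ 2) :
    |⟪x', y'⟫ - ⟪x, y⟫| ≤ δ * ‖x‖ * ‖y‖ := by
  rcases eq_or_ne x 0 with rfl | hx
  · have : x' = 0 := by simpa using h 1 0
    simp [this]
  rcases eq_or_ne y 0 with rfl | hy
  · have : y' = 0 := by simpa using h 0 1
    simp [this]
  have hab : 0 < 4 * (‖x‖ * ‖y‖) := by positivity
  have hplus := abs_le.mp (h ‖y‖ ‖x‖)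
  have hminus := abs_le.mp (h ‖y‖ (-‖x‖))
  simp only [norm_smul_add_smul_sq] at hplus hminus
  refine abs_le.mpr ⟨le_of_mul_le_mul_left ?_ hab, le_of_mul_le_mul_left ?_ hab⟩ <;> linarith

end Polarization

namespace Matrix

variable {m n K : Type*} [Fintype n] [Field K]

theorem rank_add_le (A B : Matrix m n K) : (A + B).rank ≤ A.rank + B.rank := by
  rw [rank, rank, rank, mulVecLin_add]
  refine (Submodule.finrank_mono ?_).trans (Submodule.finrank_add_le_finrank_add_finrank _ _)
  rintro _ ⟨v, rfl⟩
  exact Submodule.add_mem_sup ⟨v, rfl⟩ ⟨v, rfl⟩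

theorem rank_smul_le (c : K) (A : Matrix m n K) : (c • A).rank ≤ A.rank := by
  rcases eq_or_ne c 0 with rfl | hc
  · simp
  · exact (rank_smul_of_mem_nonZeroDivisors A (mem_nonZeroDivisors_of_ne_zero hc)).le

theorem rank_smul_add_smul_le (s t : K) (A B : Matrix m n K) :
    (s • A + t • B).rank ≤ A.rank + B.rank :=
  (rank_add_le _ _).trans (add_le_add (rank_smul_le s A) (rank_smul_le t B))

end Matrix

section Sensing

variable {n₁ n₂ m : ℕ}

lemma frobNorm_eq_norm_vec (M : Matrix (Fin n₁) (Fin n₂) ℝ) :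
    frobNorm M = ‖WithLp.toLp 2 M.vec‖ := by
  rw [frobNorm, EuclideanSpace.norm_eq, Fintype.sum_prod_type, Finset.sum_comm]
  simp [Matrix.vec]

lemma matInner_eq_inner_vec (A B : Matrix (Fin n₁) (Fin n₂) ℝ) :
    matInner A B = ⟪WithLp.toLp 2 A.vec, WithLp.toLp 2 B.vec⟫ := by
  rw [matInner, ← Matrix.vec_dotProduct_vec, EuclideanSpace.inner_eq_star_dotProduct]
  simp

lemma vec2Norm_eq_norm (y : Fin m → ℝ) : vec2Norm y = ‖WithLp.toLp 2 y‖ := by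
  simp [vec2Norm, EuclideanSpace.norm_eq]

lemma sum_mul_eq_inner (y z : Fin m → ℝ) :
    ∑ i, y i * z i = ⟪WithLp.toLp 2 y, WithLp.toLp 2 z⟫ := by
  simp [PiLp.inner_apply, mul_comm]

variable (As : Fin m → Matrix (Fin n₁) (Fin n₂) ℝ)

lemma senseOp_add (M N : Matrix (Fin n₁) (Fin n₂) ℝ) :
    senseOp As (M + N) = senseOp As M + senseOp As N := by
  ext i
  simp [senseOp, matInner, Matrix.add_mul]

lemma senseOp_smul (c : ℝ) (M : Matrix (Fin n₁) (Fin n₂) ℝ) :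
    senseOp As (c • M) = c • senseOp As M := by
  ext i
  simp [senseOp, matInner]

lemma trace_senseAdj_senseOp_sub_mul_transpose (M₁ M₂ : Matrix (Fin n₁) (Fin n₂) ℝ) :
    ((senseAdj As (senseOp As M₁) - M₁) * M₂ᵀ).trace =
      ∑ i, senseOp As M₁ i * senseOp As M₂ i - matInner M₁ M₂ := by
  rw [Matrix.sub_mul, Matrix.trace_sub, senseAdj, Matrix.sum_mul, Matrix.trace_sum,
    matInner, Matrix.trace_mul_comm]
  congr 1
  refine Finset.sum_congr rfl fun i _ => ?_
  rw [Matrix.smul_mul, Matrix.trace_smul, smul_eq_mul, Matrix.trace_mul_comm]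
  rfl

variable {As}

lemma HasRIP.abs_sq_sub_le {k : ℕ} {δ : ℝ} (hRIP : HasRIP As k δ)
    {M : Matrix (Fin n₁) (Fin n₂) ℝ} (hM : M.rank ≤ k) :
    |vec2Norm (senseOp As M) ^ 2 - frobNorm M ^ 2| ≤ δ * frobNorm M ^ 2 := by
  obtain ⟨hlower, hupper⟩ := hRIP.2.2 M hM
  exact abs_sub_le_iff.mpr ⟨by linarith, by linarith⟩

theorem HasRIP.abs_sum_mul_sub_matInner_le {k : ℕ} {δ : ℝ} (hRIP : HasRIP As k δ)
    {M₁ M₂ : Matrix (Fin n₁) (Fin n₂) ℝ} (hrank : ∀ s t : ℝ, (s • M₁ + t • M₂).rank ≤ k) :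
    |∑ i, senseOp As M₁ i * senseOp As M₂ i - matInner M₁ M₂| ≤
      δ * frobNorm M₁ * frobNorm M₂ := by
  rw [frobNorm_eq_norm_vec, frobNorm_eq_norm_vec, matInner_eq_inner_vec, sum_mul_eq_inner]
  refine abs_inner_sub_inner_le_of_abs_norm_sq_sub_le fun s t => ?_
  simpa only [vec2Norm_eq_norm, frobNorm_eq_norm_vec, senseOp_add, senseOp_smul,
    Matrix.vec_add, Matrix.vec_smul, WithLp.toLp_add, WithLp.toLp_smul]
    using hRIP.abs_sq_sub_le (hrank s t)

end Sensing

/-- Lemma 5, RIP implies near-isometry of inner products: under the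
rank-`2r` RIP with constant `δ`, for all `M₁, M₂` of rank at most `r`,
`|⟨𝒜(M₁), 𝒜(M₂)⟩ − ⟨M₁, M₂⟩| ≤ δ‖M₁‖_F‖M₂‖_F`; equivalently,
`|Tr([(𝒜*𝒜 − ℐ)(M₁)]M₂ᵀ)| ≤ δ‖M₁‖_F‖M₂‖_F`. -/
theorem rip_inner_product_bound
    {n₁ n₂ r m : ℕ} (As : Fin m → Matrix (Fin n₁) (Fin n₂) ℝ) (δ : ℝ)
    (hRIP : HasRIP As (2 * r) δ)
    (M₁ M₂ : Matrix (Fin n₁) (Fin n₂) ℝ)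
    (h₁ : M₁.rank ≤ r) (h₂ : M₂.rank ≤ r) :
    |(∑ i, senseOp As M₁ i * senseOp As M₂ i) - matInner M₁ M₂| ≤
      δ * frobNorm M₁ * frobNorm M₂ ∧
    |Matrix.trace ((senseAdj As (senseOp As M₁) - M₁) * M₂ᵀ)| ≤
      δ * frobNorm M₁ * frobNorm M₂ := by
  have hbound := hRIP.abs_sum_mul_sub_matInner_le fun s t =>
    (Matrix.rank_smul_add_smul_le s t M₁ M₂).trans (by omega)
  exact ⟨hbound, by rwa [trace_senseAdj_senseOp_sub_mul_transpose]⟩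
end

section
/- Suppose the linear map 𝒜 satisfies the rank-2r RIP with constant δ_{2r}. Then for every matrix M₁ ∈ ℝ^{n₁×n₂} of rank at most r and every matrix A ∈ ℝ^{n₂×r}, one has ‖[(𝒜*𝒜 − ℐ)(M₁)]·A‖_F ≤ δ_{2r}‖M₁‖_F‖A‖, where ‖A‖ denotes the spectral norm of A and ℐ is the identity map. -/
open Matrix BigOperators

/-!
Write `C = (𝒜*𝒜 − ℐ)(M₁)` and `N = C A Aᵀ`, a matrix of rank at most `r`. Then
`‖C A‖_F² = ⟨C, N⟩ = ⟨𝒜 M₁, 𝒜 N⟩ − ⟨M₁, N⟩`. Comparing the RIP upper bound for `M₁ + t N` with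
the lower bound for `M₁ − t N` (both of rank at most `2r`) and optimising over `t` bounds this by
`δ ‖M₁‖_F ‖N‖_F`, while `‖N‖_F ≤ ‖C A‖_F ‖A‖`. Dividing by `‖C A‖_F` gives the claim.
-/

open scoped InnerProductSpace

theorem frobNorm_nonneg {m n : ℕ} (M : Matrix (Fin m) (Fin n) ℝ) : 0 ≤ frobNorm M :=
  Real.sqrt_nonneg _

theorem Matrix.rank_add_le_s7 {K m n : Type*} [Field K] [Fintype n] (M N : Matrix m n K) :
    (M + N).rank ≤ M.rank + N.rank := by
  rw [Matrix.rank, Matrix.rank, Matrix.rank, Matrix.mulVecLin_add]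
  exact (Submodule.finrank_mono (LinearMap.range_add_le _ _)).trans
    (Submodule.finrank_add_le_finrank_add_finrank _ _)

theorem Matrix.rank_smul_le_s7 {K m n : Type*} [Field K] [Fintype m] [DecidableEq m] [Fintype n]
    (c : K) (N : Matrix m n K) : (c • N).rank ≤ N.rank := by
  simpa using Matrix.rank_mul_le_right (c • (1 : Matrix m m K)) N

theorem norm_add_smul_sq {F : Type*} [NormedAddCommGroup F] [InnerProductSpace ℝ F]
    (u v : F) (t : ℝ) : ‖u + t • v‖ ^ 2 = ‖u‖ ^ 2 + 2 * t * ⟪u, v⟫_ℝ + t ^ 2 * ‖v‖ ^ 2 := by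
  rw [norm_add_sq_real, real_inner_smul_right, norm_smul, mul_pow, Real.norm_eq_abs, sq_abs]
  ring

section RestrictedIsometry

variable {E F : Type*} [NormedAddCommGroup E] [InnerProductSpace ℝ E]
  [NormedAddCommGroup F] [InnerProductSpace ℝ F] (T : E →ₗ[ℝ] F) {x y : E} {δ : ℝ}

theorem four_mul_inner_map_sub_inner_le
    (hle : ∀ t : ℝ, ‖T (x + t • y)‖ ^ 2 ≤ (1 + δ) * ‖x + t • y‖ ^ 2)
    (hge : ∀ t : ℝ, (1 - δ) * ‖x + t • y‖ ^ 2 ≤ ‖T (x + t • y)‖ ^ 2) (t : ℝ) :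
    4 * t * (⟪T x, T y⟫_ℝ - ⟪x, y⟫_ℝ) ≤ 2 * δ * (‖x‖ ^ 2 + t ^ 2 * ‖y‖ ^ 2) := by
  have hplus := hle t
  have hminus := hge (-t)
  simp only [map_add, map_smul, norm_add_smul_sq] at hplus hminus
  linarith

theorem inner_map_sub_inner_le
    (hle : ∀ t : ℝ, ‖T (x + t • y)‖ ^ 2 ≤ (1 + δ) * ‖x + t • y‖ ^ 2)
    (hge : ∀ t : ℝ, (1 - δ) * ‖x + t • y‖ ^ 2 ≤ ‖T (x + t • y)‖ ^ 2) :
    ⟪T x, T y⟫_ℝ - ⟪x, y⟫_ℝ ≤ δ * ‖x‖ * ‖y‖ := by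
  rcases eq_or_ne x 0 with rfl | hx
  · simp
  rcases eq_or_ne y 0 with rfl | hy
  · simp
  set t := ‖x‖ / ‖y‖
  have hty : t * ‖y‖ = ‖x‖ := div_mul_cancel₀ _ (norm_ne_zero_iff.mpr hy)
  refine le_of_mul_le_mul_left ?_ (by positivity : (0 : ℝ) < 4 * t)
  calc 4 * t * (⟪T x, T y⟫_ℝ - ⟪x, y⟫_ℝ) ≤ 2 * δ * (‖x‖ ^ 2 + t ^ 2 * ‖y‖ ^ 2) :=
        four_mul_inner_map_sub_inner_le T hle hge t
    _ = 4 * t * (δ * ‖x‖ * ‖y‖) := by rw [← hty]; ring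

end RestrictedIsometry

noncomputable def frobVec {m n : ℕ} :
    Matrix (Fin m) (Fin n) ℝ ≃ₗ[ℝ] EuclideanSpace ℝ (Fin m × Fin n) :=
  (LinearEquiv.curry ℝ ℝ (Fin m) (Fin n)).symm ≪≫ₗ (WithLp.linearEquiv 2 ℝ _).symm

theorem frobVec_apply {m n : ℕ} (M : Matrix (Fin m) (Fin n) ℝ) (p : Fin m × Fin n) :
    frobVec M p = M p.1 p.2 := rfl

theorem frobNorm_eq_norm_frobVec {m n : ℕ} (M : Matrix (Fin m) (Fin n) ℝ) :
    frobNorm M = ‖frobVec M‖ := by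
  rw [frobNorm, EuclideanSpace.norm_eq, Fintype.sum_prod_type]
  simp only [frobVec_apply, Real.norm_eq_abs, sq_abs]

theorem matInner_eq_inner_frobVec {m n : ℕ} (A B : Matrix (Fin m) (Fin n) ℝ) :
    matInner A B = ⟪frobVec A, frobVec B⟫_ℝ := by
  rw [matInner, PiLp.inner_apply, Fintype.sum_prod_type, Matrix.trace, Finset.sum_comm]
  simp [Matrix.mul_apply, frobVec_apply, mul_comm]

theorem vec2Norm_eq_norm_toLp {m : ℕ} (y : Fin m → ℝ) : vec2Norm y = ‖WithLp.toLp 2 y‖ := by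
  simp [vec2Norm, EuclideanSpace.norm_eq]

noncomputable def senseLin {n₁ n₂ m : ℕ} (As : Fin m → Matrix (Fin n₁) (Fin n₂) ℝ) :
    Matrix (Fin n₁) (Fin n₂) ℝ →ₗ[ℝ] EuclideanSpace ℝ (Fin m) :=
  (WithLp.linearEquiv 2 ℝ (Fin m → ℝ)).symm.toLinearMap ∘ₗ
    LinearMap.pi fun i => innerₛₗ ℝ (frobVec (As i)) ∘ₗ frobVec.toLinearMap

theorem senseLin_apply {n₁ n₂ m : ℕ} (As : Fin m → Matrix (Fin n₁) (Fin n₂) ℝ)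
    (M : Matrix (Fin n₁) (Fin n₂) ℝ) : senseLin As M = WithLp.toLp 2 (senseOp As M) := by
  ext i
  simp [senseLin, senseOp, matInner_eq_inner_frobVec]

theorem matInner_senseAdj {n₁ n₂ m : ℕ} (As : Fin m → Matrix (Fin n₁) (Fin n₂) ℝ)
    (y : Fin m → ℝ) (N : Matrix (Fin n₁) (Fin n₂) ℝ) :
    matInner (senseAdj As y) N = ⟪WithLp.toLp 2 y, senseLin As N⟫_ℝ := by
  rw [senseLin_apply, PiLp.inner_apply, matInner_eq_inner_frobVec, senseAdj, map_sum, sum_inner]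
  simp [senseOp, matInner_eq_inner_frobVec, real_inner_smul_left, mul_comm]

theorem HasRIP.matInner_sub_le {n₁ n₂ m r : ℕ} {As : Fin m → Matrix (Fin n₁) (Fin n₂) ℝ}
    {δ : ℝ} (hRIP : HasRIP As (2 * r) δ) {M N : Matrix (Fin n₁) (Fin n₂) ℝ}
    (hM : M.rank ≤ r) (hN : N.rank ≤ r) :
    matInner (senseAdj As (senseOp As M) - M) N ≤ δ * frobNorm M * frobNorm N := by
  have hrip (t : ℝ) := hRIP.2.2 (M + t • N) <|
    (Matrix.rank_add_le_s7 _ _).trans (by have := Matrix.rank_smul_le_s7 t N; omega)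
  set T := senseLin As ∘ₗ frobVec.symm.toLinearMap
  have hT (Z : Matrix (Fin n₁) (Fin n₂) ℝ) : T (frobVec Z) = WithLp.toLp 2 (senseOp As Z) := by
    simp [T, senseLin_apply]
  have hadj : matInner (senseAdj As (senseOp As M)) N = ⟪T (frobVec M), T (frobVec N)⟫_ℝ := by
    rw [hT, hT, ← senseLin_apply As N, matInner_senseAdj]
  calc matInner (senseAdj As (senseOp As M) - M) N
      = ⟪T (frobVec M), T (frobVec N)⟫_ℝ - ⟪frobVec M, frobVec N⟫_ℝ := by
        rw [matInner_eq_inner_frobVec, map_sub, inner_sub_left, ← matInner_eq_inner_frobVec, hadj]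
    _ ≤ δ * ‖frobVec M‖ * ‖frobVec N‖ := by
        refine inner_map_sub_inner_le T (fun t => ?_) (fun t => ?_) <;>
          rw [← map_smul, ← map_add, hT, ← vec2Norm_eq_norm_toLp, ← frobNorm_eq_norm_frobVec]
        exacts [(hrip t).2, (hrip t).1]
    _ = δ * frobNorm M * frobNorm N := by
        rw [frobNorm_eq_norm_frobVec, frobNorm_eq_norm_frobVec]

theorem frobNorm_sq_eq_matInner_mul_transpose {n₁ n₂ r : ℕ} (C : Matrix (Fin n₁) (Fin n₂) ℝ)
    (A : Matrix (Fin n₂) (Fin r) ℝ) : frobNorm (C * A) ^ 2 = matInner C (C * A * Aᵀ) := by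
  have hcyc : matInner C (C * A * Aᵀ) = matInner (C * A) (C * A) := by
    rw [matInner, matInner, Matrix.transpose_mul, Matrix.transpose_transpose, Matrix.mul_assoc,
      Matrix.trace_mul_comm, Matrix.mul_assoc]
  rw [hcyc, matInner_eq_inner_frobVec, real_inner_self_eq_norm_sq, frobNorm_eq_norm_frobVec]

theorem frobNorm_sq_eq_sum_norm_row_sq {m n : ℕ} (M : Matrix (Fin m) (Fin n) ℝ) :
    frobNorm M ^ 2 = ∑ i, ‖WithLp.toLp 2 (M i)‖ ^ 2 := by
  rw [frobNorm, Real.sq_sqrt (by positivity)]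
  simp [EuclideanSpace.real_norm_sq_eq]

theorem norm_toEuclideanLin_le {m n : ℕ} (A : Matrix (Fin m) (Fin n) ℝ)
    (v : EuclideanSpace ℝ (Fin n)) : ‖Matrix.toEuclideanLin A v‖ ≤ specNorm A * ‖v‖ :=
  (LinearMap.toContinuousLinearMap (Matrix.toEuclideanLin A)).le_opNorm v

theorem frobNorm_mul_transpose_le {m n r : ℕ} (B : Matrix (Fin m) (Fin r) ℝ)
    (A : Matrix (Fin n) (Fin r) ℝ) : frobNorm (B * Aᵀ) ≤ frobNorm B * specNorm A := by
  have hrow (i : Fin m) :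
      WithLp.toLp 2 ((B * Aᵀ) i) = Matrix.toEuclideanLin A (WithLp.toLp 2 (B i)) := by
    ext j
    simp [Matrix.mul_apply, Matrix.mulVec, dotProduct, mul_comm]
  have hsq : frobNorm (B * Aᵀ) ^ 2 ≤ (frobNorm B * specNorm A) ^ 2 := by
    rw [frobNorm_sq_eq_sum_norm_row_sq, mul_pow, frobNorm_sq_eq_sum_norm_row_sq, Finset.sum_mul]
    refine Finset.sum_le_sum fun i _ => ?_
    rw [hrow, ← mul_pow, mul_comm]
    exact pow_le_pow_left₀ (norm_nonneg _) (norm_toEuclideanLin_le A _) 2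
  exact (pow_le_pow_iff_left₀ (frobNorm_nonneg _)
    (mul_nonneg (frobNorm_nonneg _) (norm_nonneg _)) two_ne_zero).mp hsq

/-- consequence of Lemma 5: under the rank-`2r` RIP with constant
`δ`, for every `M₁` of rank at most `r` and every `A ∈ ℝ^{n₂×r}`,
`‖[(𝒜*𝒜 − ℐ)(M₁)]A‖_F ≤ δ‖M₁‖_F‖A‖`. -/
theorem rip_operator_deviation_bound
    {n₁ n₂ r m : ℕ} (As : Fin m → Matrix (Fin n₁) (Fin n₂) ℝ) (δ : ℝ)
    (hRIP : HasRIP As (2 * r) δ)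
    (M₁ : Matrix (Fin n₁) (Fin n₂) ℝ) (h₁ : M₁.rank ≤ r)
    (A : Matrix (Fin n₂) (Fin r) ℝ) :
    frobNorm ((senseAdj As (senseOp As M₁) - M₁) * A) ≤
      δ * frobNorm M₁ * specNorm A := by
  set C := senseAdj As (senseOp As M₁) - M₁
  have hδM₁ : 0 ≤ δ * frobNorm M₁ := mul_nonneg hRIP.1 (frobNorm_nonneg M₁)
  have hrank : (C * A * Aᵀ).rank ≤ r :=
    (Matrix.rank_mul_le_right _ _).trans (Matrix.rank_le_height Aᵀ)
  have hsq : frobNorm (C * A) ^ 2 ≤ δ * frobNorm M₁ * specNorm A * frobNorm (C * A) :=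
    calc frobNorm (C * A) ^ 2 = matInner C (C * A * Aᵀ) :=
          frobNorm_sq_eq_matInner_mul_transpose C A
      _ ≤ δ * frobNorm M₁ * frobNorm (C * A * Aᵀ) := hRIP.matInner_sub_le h₁ hrank
      _ ≤ δ * frobNorm M₁ * (frobNorm (C * A) * specNorm A) :=
          mul_le_mul_of_nonneg_left (frobNorm_mul_transpose_le _ _) hδM₁
      _ = δ * frobNorm M₁ * specNorm A * frobNorm (C * A) := by ring
  rcases (frobNorm_nonneg (C * A)).eq_or_lt with hzero | hpos
  · rw [← hzero]
    exact mul_nonneg hδM₁ (norm_nonneg _)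
  · exact le_of_mul_le_mul_right (by rwa [sq] at hsq) hpos
end
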